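/- arXiv:1806.01492 — 6 statements merged into one kernel-verified Lean document; each statement's English description precedes it below -/
import Mathlib

section
/- Let P be a nonnegative n×n matrix whose rows have ℓ1 norm at most 1, let γ ∈ (0,1), and let v ∈ ℝⁿ be nonnegative. Then ‖(I − γP)^{-1} √v‖_∞ ≤ √( (1/(1−γ)) · ‖(I − γP)^{-1} v‖_∞ ). -/
open scoped BigOperators

attribute [local instance] Matrix.linftyOpNormedRing Matrix.linftyOpNormedAlgebra
  Matrix.linftyOpNormedSpace Matrix.linftyOpIsBoundedSMul

section Aux

variable {n : ℕ}

/-- Entry of a matrix bounded by the linfty operator norm. -/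
private lemma entry_le_norm (B : Matrix (Fin n) (Fin n) ℝ) (i j : Fin n) :
    ‖B i j‖ ≤ ‖B‖ := by
  rw [Matrix.linfty_opNorm_def]
  have h1 : ‖B i j‖₊ ≤ ∑ k, ‖B i k‖₊ :=
    Finset.single_le_sum (f := fun k => ‖B i k‖₊) (fun _ _ => zero_le)
      (Finset.mem_univ j)
  have h2 : (∑ k, ‖B i k‖₊) ≤ Finset.univ.sup fun i : Fin n => ∑ k, ‖B i k‖₊ :=
    Finset.le_sup (f := fun i : Fin n => ∑ k, ‖B i k‖₊) (Finset.mem_univ i)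
  exact_mod_cast h1.trans h2

/-- Evaluation at an entry as a continuous linear map. -/
private noncomputable def entryCLM (i j : Fin n) : Matrix (Fin n) (Fin n) ℝ →L[ℝ] ℝ :=
  LinearMap.mkContinuous
    { toFun := fun B => B i j
      map_add' := fun _ _ => rfl
      map_smul' := fun _ _ => rfl } 1
    (fun B => by show ‖B i j‖ ≤ 1 * ‖B‖; rw [one_mul]; exact entry_le_norm B i j)

end Aux

theorem stmt_1 {n : ℕ} (P : Matrix (Fin n) (Fin n) ℝ) (v : Fin n → ℝ) (γ : ℝ)
    (hP : ∀ i j, 0 ≤ P i j) (hrow : ∀ i, ∑ j, P i j ≤ 1)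
    (hγ : γ ∈ Set.Ioo (0 : ℝ) 1) (hv : ∀ j, 0 ≤ v j) :
    ‖(1 - γ • P)⁻¹.mulVec (fun j => Real.sqrt (v j))‖ ≤
      Real.sqrt ((1 / (1 - γ)) * ‖(1 - γ • P)⁻¹.mulVec v‖) := by
  obtain ⟨hγ0, hγ1⟩ := hγ
  set A : Matrix (Fin n) (Fin n) ℝ := γ • P with hAdef
  -- entries of A are nonnegative
  have hA0 : ∀ i j, 0 ≤ A i j := fun i j =>
    mul_nonneg hγ0.le (hP i j)
  -- row sums of A bounded by γ
  have hArow : ∀ i, ∑ j, A i j ≤ γ := by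
    intro i
    have : ∑ j, A i j = γ * ∑ j, P i j := by
      simp [hAdef, Matrix.smul_apply, Finset.mul_sum, smul_eq_mul]
    rw [this]
    calc γ * ∑ j, P i j ≤ γ * 1 := by
          exact mul_le_mul_of_nonneg_left (hrow i) hγ0.le
      _ = γ := mul_one γ
  -- norm of A is < 1
  have hPnorm : ‖P‖ ≤ 1 := by
    rw [Matrix.linfty_opNorm_def]
    have : (Finset.univ.sup fun i : Fin n => ∑ j, ‖P i j‖₊) ≤ 1 := by
      apply Finset.sup_le
      intro i _
      rw [← NNReal.coe_le_coe]
      push_cast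
      calc (∑ j, ‖P i j‖) = ∑ j, P i j := by
            refine Finset.sum_congr rfl fun j _ => ?_
            rw [Real.norm_eq_abs, abs_of_nonneg (hP i j)]
        _ ≤ 1 := hrow i
    exact_mod_cast this
  have hA1 : ‖A‖ < 1 := by
    have : ‖A‖ = |γ| * ‖P‖ := by
      rw [hAdef, norm_smul, Real.norm_eq_abs]
    rw [this, abs_of_nonneg hγ0.le]
    calc γ * ‖P‖ ≤ γ * 1 := mul_le_mul_of_nonneg_left hPnorm hγ0.le
      _ = γ := mul_one γ
      _ < 1 := hγ1
  -- Neumann series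
  set M : Matrix (Fin n) (Fin n) ℝ := (1 - A)⁻¹ with hMdef
  have hM : M = ∑' k : ℕ, A ^ k := by
    rw [hMdef, Matrix.nonsing_inv_eq_ringInverse, ← geom_series_eq_inverse A hA1]
    rfl
  have hsum : Summable fun k : ℕ => A ^ k := summable_geometric_of_norm_lt_one hA1
  have hhs : HasSum (fun k : ℕ => A ^ k) M := hM ▸ hsum.hasSum
  have hentry : ∀ i j, HasSum (fun k : ℕ => (A ^ k) i j) (M i j) := fun i j =>
    (entryCLM i j).hasSum hhs
  -- entries of powers are nonnegative
  have hpow0 : ∀ (k : ℕ) (i j : Fin n), 0 ≤ (A ^ k) i j := by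
    intro k
    induction k with
    | zero => intro i j; by_cases h : i = j <;> simp [Matrix.one_apply, h]
    | succ k ih =>
      intro i j
      rw [pow_succ, Matrix.mul_apply]
      exact Finset.sum_nonneg fun l _ => mul_nonneg (ih i l) (hA0 l j)
  -- row sums of powers bounded by γ^k
  have hpowrow : ∀ (k : ℕ) (i : Fin n), ∑ j, (A ^ k) i j ≤ γ ^ k := by
    intro k
    induction k with
    | zero =>
      intro i
      simp [Matrix.one_apply]
    | succ k ih =>
      intro i
      have : ∑ j, (A ^ (k + 1)) i j = ∑ l, (A ^ k) i l * ∑ j, A l j := by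
        simp only [pow_succ, Matrix.mul_apply]
        rw [Finset.sum_comm]
        refine Finset.sum_congr rfl fun l _ => ?_
        rw [← Finset.mul_sum]
      rw [this, pow_succ]
      calc ∑ l, (A ^ k) i l * ∑ j, A l j
          ≤ ∑ l, (A ^ k) i l * γ := by
            refine Finset.sum_le_sum fun l _ => ?_
            exact mul_le_mul_of_nonneg_left (hArow l) (hpow0 k i l)
        _ = (∑ l, (A ^ k) i l) * γ := by rw [Finset.sum_mul]
        _ ≤ γ ^ k * γ := mul_le_mul_of_nonneg_right (ih i) hγ0.le
  -- entries of M are nonnegative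
  have hM0 : ∀ i j, 0 ≤ M i j := fun i j =>
    hasSum_le (fun k => hpow0 k i j) hasSum_zero (hentry i j)
  -- row sums of M bounded by 1/(1-γ)
  have hMrow : ∀ i, ∑ j, M i j ≤ 1 / (1 - γ) := by
    intro i
    have h1 : HasSum (fun k : ℕ => ∑ j, (A ^ k) i j) (∑ j, M i j) :=
      hasSum_sum fun j _ => hentry i j
    have h2 : HasSum (fun k : ℕ => γ ^ k) (1 - γ)⁻¹ :=
      hasSum_geometric_of_lt_one hγ0.le hγ1
    have := hasSum_le (fun k => hpowrow k i) h1 h2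
    rwa [one_div]
  -- norm of Mv component bound
  have hMv : ∀ i, ∑ j, M i j * v j ≤ ‖M.mulVec v‖ := by
    intro i
    have h1 : M.mulVec v i = ∑ j, M i j * v j := by
      simp [Matrix.mulVec, dotProduct]
    calc ∑ j, M i j * v j = M.mulVec v i := h1.symm
      _ ≤ |M.mulVec v i| := le_abs_self _
      _ = ‖M.mulVec v i‖ := (Real.norm_eq_abs _).symm
      _ ≤ ‖M.mulVec v‖ := norm_le_pi_norm (M.mulVec v) i
  -- RHS is nonneg
  have hRHS : 0 ≤ Real.sqrt ((1 / (1 - γ)) * ‖M.mulVec v‖) := Real.sqrt_nonneg _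
  rcases Nat.eq_zero_or_pos n with hn | hn
  · subst hn
    have : ‖M.mulVec fun j => Real.sqrt (v j)‖ = 0 := by
      simp [Norm.norm]
    rw [this]; exact hRHS
  have : Nonempty (Fin n) := ⟨⟨0, hn⟩⟩
  rw [pi_norm_le_iff_of_nonneg hRHS]
  intro i
  have hcomp : M.mulVec (fun j => Real.sqrt (v j)) i
      = ∑ j, M i j * Real.sqrt (v j) := by
    simp [Matrix.mulVec, dotProduct]
  have hnn : 0 ≤ ∑ j, M i j * Real.sqrt (v j) :=
    Finset.sum_nonneg fun j _ => mul_nonneg (hM0 i j) (Real.sqrt_nonneg _)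
  rw [Real.norm_eq_abs, hcomp, abs_of_nonneg hnn]
  have hfrac : 0 ≤ 1 / (1 - γ) := div_nonneg zero_le_one (by linarith)
  rw [Real.le_sqrt hnn (mul_nonneg hfrac (norm_nonneg _))]
  -- Cauchy-Schwarz
  have hcs : (∑ j, M i j * Real.sqrt (v j)) ^ 2
      ≤ (∑ j, M i j) * ∑ j, M i j * v j := by
    have := Finset.sum_mul_sq_le_sq_mul_sq Finset.univ
      (fun j => Real.sqrt (M i j)) (fun j => Real.sqrt (M i j) * Real.sqrt (v j))
    have e1 : ∀ j, Real.sqrt (M i j) * (Real.sqrt (M i j) * Real.sqrt (v j))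
        = M i j * Real.sqrt (v j) := by
      intro j
      rw [← mul_assoc, Real.mul_self_sqrt (hM0 i j)]
    have e2 : ∀ j, Real.sqrt (M i j) ^ 2 = M i j := fun j =>
      Real.sq_sqrt (hM0 i j)
    have e3 : ∀ j, (Real.sqrt (M i j) * Real.sqrt (v j)) ^ 2 = M i j * v j := by
      intro j
      rw [mul_pow, Real.sq_sqrt (hM0 i j), Real.sq_sqrt (hv j)]
    simp only [e1, e2, e3] at this
    exact this
  calc (∑ j, M i j * Real.sqrt (v j)) ^ 2
      ≤ (∑ j, M i j) * ∑ j, M i j * v j := hcs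
    _ ≤ (1 / (1 - γ)) * ‖M.mulVec v‖ := by
        apply mul_le_mul (hMrow i) (hMv i)
        · exact Finset.sum_nonneg fun j _ => mul_nonneg (hM0 i j) (hv j)
        · exact div_nonneg zero_le_one (by linarith)
end

section
/- Let P be a nonnegative n×n matrix whose rows have ℓ1 norm at most 1 and let γ ∈ (0,1). Then for every nonnegative v ∈ ℝⁿ, ‖(I − γP)^{-1} v‖_∞ ≤ (1+γ) · ‖(I − γ²P)^{-1} v‖_∞. -/
open Finset

lemma aux_mulVec_apply {n : ℕ} (P : Matrix (Fin n) (Fin n) ℝ) (β : ℝ) (z : Fin n → ℝ) (i : Fin n) :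
    ((1 - β • P).mulVec z) i = z i - β * ∑ j, P i j * z j := by
  rw [Matrix.sub_mulVec, Matrix.smul_mulVec, Matrix.one_mulVec]
  simp [Matrix.mulVec, dotProduct]

lemma aux_nonneg {n : ℕ} (P : Matrix (Fin n) (Fin n) ℝ) (β : ℝ)
    (hP : ∀ i j, 0 ≤ P i j) (hrow : ∀ i, ∑ j, P i j ≤ 1)
    (hβ0 : 0 ≤ β) (hβ1 : β < 1) (z : Fin n → ℝ)
    (hz : ∀ i, 0 ≤ ((1 - β • P).mulVec z) i) : ∀ i, 0 ≤ z i := by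
  by_contra h
  push_neg at h
  obtain ⟨i, hi⟩ := h
  obtain ⟨i0, -, hmin⟩ := Finset.exists_min_image Finset.univ z ⟨i, Finset.mem_univ i⟩
  have hzi0 : z i0 < 0 := lt_of_le_of_lt (hmin i (Finset.mem_univ i)) hi
  have hv := hz i0
  rw [aux_mulVec_apply] at hv
  have h1 : z i0 ≤ ∑ j, P i0 j * z j := by
    have hs : (∑ j, P i0 j) * z i0 ≤ ∑ j, P i0 j * z j := by
      rw [Finset.sum_mul]
      exact Finset.sum_le_sum fun j _ =>
        mul_le_mul_of_nonneg_left (hmin j (Finset.mem_univ j)) (hP i0 j)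
    nlinarith [hrow i0]
  nlinarith [mul_le_mul_of_nonneg_left h1 hβ0]

lemma aux_bound {n : ℕ} (P : Matrix (Fin n) (Fin n) ℝ) (β : ℝ)
    (hP : ∀ i j, 0 ≤ P i j) (hrow : ∀ i, ∑ j, P i j ≤ 1)
    (hβ0 : 0 ≤ β) (hβ1 : β < 1) (z : Fin n → ℝ) (c : ℝ)
    (hz : ∀ i, 0 ≤ z i)
    (hc : ∀ i, ((1 - β • P).mulVec z) i ≤ c) : ∀ i, z i ≤ c / (1 - β) := by
  intro i
  obtain ⟨i0, -, hmax⟩ := Finset.exists_max_image Finset.univ z ⟨i, Finset.mem_univ i⟩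
  have hv := hc i0
  rw [aux_mulVec_apply] at hv
  have h1 : ∑ j, P i0 j * z j ≤ z i0 := by
    have hs : ∑ j, P i0 j * z j ≤ (∑ j, P i0 j) * z i0 := by
      rw [Finset.sum_mul]
      exact Finset.sum_le_sum fun j _ =>
        mul_le_mul_of_nonneg_left (hmax j (Finset.mem_univ j)) (hP i0 j)
    nlinarith [hrow i0, hz i0]
  have hzi0 : z i0 ≤ c / (1 - β) := by
    rw [le_div_iff₀ (by linarith)]
    nlinarith [mul_le_mul_of_nonneg_left h1 hβ0]
  exact le_trans (hmax i (Finset.mem_univ i)) hzi0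

lemma aux_det {n : ℕ} (P : Matrix (Fin n) (Fin n) ℝ) (β : ℝ)
    (hP : ∀ i j, 0 ≤ P i j) (hrow : ∀ i, ∑ j, P i j ≤ 1)
    (hβ0 : 0 ≤ β) (hβ1 : β < 1) : IsUnit (1 - β • P).det := by
  rw [isUnit_iff_ne_zero]
  intro hdet
  obtain ⟨v, hv0, hv⟩ := Matrix.exists_mulVec_eq_zero_iff.2 hdet
  have h1 := aux_nonneg P β hP hrow hβ0 hβ1 v (by simp [hv])
  have h2 := aux_nonneg P β hP hrow hβ0 hβ1 (-v)
    (by simp [Matrix.mulVec_neg, hv])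
  apply hv0
  funext i
  have := h2 i
  simp only [Pi.neg_apply, neg_nonneg] at this
  exact le_antisymm this (h1 i)

theorem stmt_2 {n : ℕ} (P : Matrix (Fin n) (Fin n) ℝ) (γ : ℝ)
    (hP : ∀ i j, 0 ≤ P i j) (hrow : ∀ i, ∑ j, P i j ≤ 1)
    (hγ : γ ∈ Set.Ioo (0 : ℝ) 1) :
    ∀ v : Fin n → ℝ, (∀ j, 0 ≤ v j) →
      ‖(1 - γ • P)⁻¹.mulVec v‖ ≤ (1 + γ) * ‖(1 - (γ ^ 2) • P)⁻¹.mulVec v‖ := by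
  obtain ⟨hγ0, hγ1⟩ := hγ
  intro v hv
  set A : Matrix (Fin n) (Fin n) ℝ := 1 - γ • P with hAdef
  set B : Matrix (Fin n) (Fin n) ℝ := 1 - (γ ^ 2) • P with hBdef
  have hγ0' : (0:ℝ) ≤ γ := le_of_lt hγ0
  have hβ0 : (0:ℝ) ≤ γ ^ 2 := sq_nonneg γ
  have hβ1 : γ ^ 2 < 1 := by nlinarith
  have hA : IsUnit A.det := aux_det P γ hP hrow hγ0' hγ1
  have hB : IsUnit B.det := aux_det P (γ ^ 2) hP hrow hβ0 hβ1
  set w : Fin n → ℝ := B⁻¹.mulVec v with hwdef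
  have hBw : B.mulVec w = v := by
    rw [hwdef, Matrix.mulVec_mulVec, Matrix.mul_nonsing_inv _ hB, Matrix.one_mulVec]
  have hw : ∀ i, 0 ≤ w i :=
    aux_nonneg P (γ ^ 2) hP hrow hβ0 hβ1 w (by rw [← hBdef, hBw]; exact hv)
  have hwle : ∀ i, w i ≤ ‖w‖ := fun i =>
    le_trans (le_abs_self _) ((Real.norm_eq_abs _) ▸ norm_le_pi_norm w i)
  have hwnn : (0:ℝ) ≤ ‖w‖ := norm_nonneg w
  set r : Fin n → ℝ := A⁻¹.mulVec (P.mulVec w) with hrdef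
  have hAr : A.mulVec r = P.mulVec w := by
    rw [hrdef, Matrix.mulVec_mulVec, Matrix.mul_nonsing_inv _ hA, Matrix.one_mulVec]
  have hPw0 : ∀ i, 0 ≤ (P.mulVec w) i := by
    intro i
    simp only [Matrix.mulVec, dotProduct]
    exact Finset.sum_nonneg fun j _ => mul_nonneg (hP i j) (hw j)
  have hPwle : ∀ i, (P.mulVec w) i ≤ ‖w‖ := by
    intro i
    simp only [Matrix.mulVec, dotProduct]
    calc ∑ j, P i j * w j ≤ ∑ j, P i j * ‖w‖ :=
          Finset.sum_le_sum fun j _ => mul_le_mul_of_nonneg_left (hwle j) (hP i j)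
      _ = (∑ j, P i j) * ‖w‖ := by rw [Finset.sum_mul]
      _ ≤ 1 * ‖w‖ := mul_le_mul_of_nonneg_right (hrow i) hwnn
      _ = ‖w‖ := one_mul _
  have hr0 : ∀ i, 0 ≤ r i :=
    aux_nonneg P γ hP hrow hγ0' hγ1 r (by rw [← hAdef, hAr]; exact hPw0)
  have hrle : ∀ i, r i ≤ ‖w‖ / (1 - γ) :=
    aux_bound P γ hP hrow hγ0' hγ1 r ‖w‖ hr0 (by rw [← hAdef, hAr]; exact hPwle)
  have hu_eq : A⁻¹.mulVec v = w + (γ * (1 - γ)) • r := by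
    have hAu' : A.mulVec (w + (γ * (1 - γ)) • r) = v := by
      rw [Matrix.mulVec_add, Matrix.mulVec_smul, hAr, ← hBw]
      funext i
      rw [aux_mulVec_apply, Pi.add_apply, Pi.smul_apply, aux_mulVec_apply]
      simp only [Matrix.mulVec, dotProduct, smul_eq_mul]
      ring
    calc A⁻¹.mulVec v = A⁻¹.mulVec (A.mulVec (w + (γ * (1 - γ)) • r)) := by rw [hAu']
      _ = (A⁻¹ * A).mulVec (w + (γ * (1 - γ)) • r) := by rw [Matrix.mulVec_mulVec]
      _ = w + (γ * (1 - γ)) • r := by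
          rw [Matrix.nonsing_inv_mul _ hA, Matrix.one_mulVec]
  rw [hu_eq]
  rw [pi_norm_le_iff_of_nonneg (by positivity)]
  intro i
  rw [Real.norm_eq_abs, abs_le]
  have h1 : (γ * (1 - γ)) * r i ≤ γ * ‖w‖ := by
    have := hrle i
    have h2 : (γ * (1 - γ)) * r i ≤ (γ * (1 - γ)) * (‖w‖ / (1 - γ)) :=
      mul_le_mul_of_nonneg_left this (by nlinarith)
    calc (γ * (1 - γ)) * r i ≤ (γ * (1 - γ)) * (‖w‖ / (1 - γ)) := h2
      _ = γ * ‖w‖ := by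
          have h1γ : (1:ℝ) - γ ≠ 0 := by linarith
          field_simp
  constructor
  · have : 0 ≤ w i + (γ * (1 - γ)) * r i := by
      have := mul_nonneg (mul_nonneg hγ0' (by linarith : (0:ℝ) ≤ 1 - γ)) (hr0 i)
      linarith [hw i]
    simp only [Pi.add_apply, Pi.smul_apply, smul_eq_mul]
    nlinarith
  · simp only [Pi.add_apply, Pi.smul_apply, smul_eq_mul]
    nlinarith [hwle i]
end

section
/- Let P be a nonnegative n×n matrix whose rows have ℓ1 norm at most 1, γ ∈ (0,1), and v ∈ ℝⁿ nonnegative. Then ‖(I − γP)^{-1} √v‖_∞ ≤ √( ((1+γ)/(1−γ)) · ‖(I − γ²P)^{-1} v‖_∞ ). -/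
/-- Minimum principle: if `x - β P x ≥ 0` entrywise, with `P ≥ 0`, row sums ≤ 1,
`0 ≤ β < 1`, then `x ≥ 0` entrywise. -/
lemma stmt3_min_principle {n : ℕ} (P : Matrix (Fin n) (Fin n) ℝ)
    (hP : ∀ i j, 0 ≤ P i j) (hrow : ∀ i, ∑ j, P i j ≤ 1)
    {β : ℝ} (hβ0 : 0 ≤ β) (hβ1 : β < 1)
    (x : Fin n → ℝ) (h : ∀ i, 0 ≤ x i - β * (P.mulVec x) i) :
    ∀ i, 0 ≤ x i := by
  intro i
  obtain ⟨i₀, -, hmin⟩ := Finset.exists_min_image Finset.univ x ⟨i, Finset.mem_univ i⟩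
  have hmin' : ∀ j, x i₀ ≤ x j := fun j => hmin j (Finset.mem_univ j)
  have key : 0 ≤ x i₀ := by
    by_contra hneg
    push_neg at hneg
    have hPx : x i₀ ≤ P.mulVec x i₀ := by
      have h1 : ∀ j, P i₀ j * x i₀ ≤ P i₀ j * x j :=
        fun j => mul_le_mul_of_nonneg_left (hmin' j) (hP i₀ j)
      have h2 : (∑ j, P i₀ j) * x i₀ ≤ ∑ j, P i₀ j * x j := by
        rw [Finset.sum_mul]
        exact Finset.sum_le_sum fun j _ => h1 j
      have h3 : x i₀ ≤ (∑ j, P i₀ j) * x i₀ := by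
        nlinarith [hrow i₀]
      calc x i₀ ≤ (∑ j, P i₀ j) * x i₀ := h3
        _ ≤ ∑ j, P i₀ j * x j := h2
        _ = P.mulVec x i₀ := rfl
    have := h i₀
    nlinarith
  exact le_trans key (hmin' i)

lemma stmt3_entry {n : ℕ} (P : Matrix (Fin n) (Fin n) ℝ) (β : ℝ) (y : Fin n → ℝ) (i : Fin n) :
    (1 - β • P).mulVec y i = y i - β * (P.mulVec y) i := by
  rw [Matrix.sub_mulVec, Matrix.smul_mulVec, Matrix.one_mulVec]
  simp

lemma stmt3_isUnit_det {n : ℕ} (P : Matrix (Fin n) (Fin n) ℝ)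
    (hP : ∀ i j, 0 ≤ P i j) (hrow : ∀ i, ∑ j, P i j ≤ 1)
    {β : ℝ} (hβ0 : 0 ≤ β) (hβ1 : β < 1) :
    IsUnit (1 - β • P).det := by
  rw [isUnit_iff_ne_zero]
  intro hdet
  obtain ⟨x, hx0, hxz⟩ := Matrix.exists_mulVec_eq_zero_iff.mpr hdet
  have hz : ∀ i, x i - β * (P.mulVec x) i = 0 := by
    intro i
    rw [← stmt3_entry P β x i, hxz]
    rfl
  have hpos : ∀ i, 0 ≤ x i :=
    stmt3_min_principle P hP hrow hβ0 hβ1 x (fun i => le_of_eq (hz i).symm)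
  have hneg : ∀ i, 0 ≤ -x i := by
    refine stmt3_min_principle P hP hrow hβ0 hβ1 (-x) (fun i => ?_)
    have : P.mulVec (-x) = -(P.mulVec x) := Matrix.mulVec_neg x P
    rw [this]
    simp only [Pi.neg_apply, mul_neg]
    have := hz i
    linarith
  exact hx0 (funext fun i => by
    have h1 := hneg i; have h2 := hpos i
    show x i = 0
    linarith)

/-- Fixed point equation for the inverse. -/
lemma stmt3_fix {n : ℕ} (P : Matrix (Fin n) (Fin n) ℝ) {β : ℝ}
    (hdet : IsUnit (1 - β • P).det) (y : Fin n → ℝ) (i : Fin n) :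
    (1 - β • P)⁻¹.mulVec y i
      = y i + β * (P.mulVec ((1 - β • P)⁻¹.mulVec y)) i := by
  have : (1 - β • P).mulVec ((1 - β • P)⁻¹.mulVec y) = y := by
    rw [Matrix.mulVec_mulVec, Matrix.mul_nonsing_inv _ hdet, Matrix.one_mulVec]
  have h2 := congrFun this i
  rw [stmt3_entry] at h2
  linarith

theorem stmt_3 {n : ℕ} (P : Matrix (Fin n) (Fin n) ℝ) (v : Fin n → ℝ) (γ : ℝ)
    (hP : ∀ i j, 0 ≤ P i j) (hrow : ∀ i, ∑ j, P i j ≤ 1)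
    (hγ : γ ∈ Set.Ioo (0 : ℝ) 1) (hv : ∀ j, 0 ≤ v j) :
    ‖(1 - γ • P)⁻¹.mulVec (fun j => Real.sqrt (v j))‖ ≤
      Real.sqrt (((1 + γ) / (1 - γ)) * ‖(1 - (γ ^ 2) • P)⁻¹.mulVec v‖) := by
  obtain ⟨hγ0, hγ1⟩ := hγ
  have hγ0' : (0:ℝ) ≤ γ := le_of_lt hγ0
  have h1γ : (0:ℝ) < 1 - γ := by linarith
  have hγ20 : (0:ℝ) ≤ γ ^ 2 := sq_nonneg γ
  have hγ21 : γ ^ 2 < 1 := by nlinarith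
  -- invertibility
  have hdet1 : IsUnit (1 - γ • P).det := stmt3_isUnit_det P hP hrow hγ0' hγ1
  have hdet2 : IsUnit (1 - (γ ^ 2) • P).det := stmt3_isUnit_det P hP hrow hγ20 hγ21
  set s : Fin n → ℝ := fun j => Real.sqrt (v j) with hs
  set u : Fin n → ℝ := (1 - γ • P)⁻¹.mulVec s with hu
  set w1 : Fin n → ℝ := (1 - γ • P)⁻¹.mulVec v with hw1
  set w2 : Fin n → ℝ := (1 - (γ ^ 2) • P)⁻¹.mulVec v with hw2
  have equ : ∀ i, u i = s i + γ * (P.mulVec u) i := stmt3_fix P hdet1 s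
  have eqw1 : ∀ i, w1 i = v i + γ * (P.mulVec w1) i := stmt3_fix P hdet1 v
  have eqw2 : ∀ i, w2 i = v i + γ ^ 2 * (P.mulVec w2) i := stmt3_fix P hdet2 v
  have hs0 : ∀ i, 0 ≤ s i := fun i => Real.sqrt_nonneg _
  have hu0 : ∀ i, 0 ≤ u i := by
    refine stmt3_min_principle P hP hrow hγ0' hγ1 u (fun i => ?_)
    have := equ i; have := hs0 i; linarith
  have hw10 : ∀ i, 0 ≤ w1 i := by
    refine stmt3_min_principle P hP hrow hγ0' hγ1 w1 (fun i => ?_)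
    have := eqw1 i; have := hv i; linarith
  have hw20 : ∀ i, 0 ≤ w2 i := by
    refine stmt3_min_principle P hP hrow hγ20 hγ21 w2 (fun i => ?_)
    have := eqw2 i; have := hv i; linarith
  set M : ℝ := ‖w1‖ with hM
  have hM0 : 0 ≤ M := norm_nonneg _
  have hw1M : ∀ i, w1 i ≤ M := by
    intro i
    calc w1 i ≤ |w1 i| := le_abs_self _
      _ = ‖w1 i‖ := rfl
      _ ≤ M := norm_le_pi_norm w1 i
  -- bound on (P w1) i and nonnegativity of (P w1) i
  have hPw1nn : ∀ i, 0 ≤ P.mulVec w1 i := by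
    intro i
    show (0:ℝ) ≤ ∑ j, P i j * w1 j
    exact Finset.sum_nonneg fun j _ => mul_nonneg (hP i j) (hw10 j)
  have hPw1M : ∀ i, P.mulVec w1 i ≤ M := by
    intro i
    have : P.mulVec w1 i = ∑ j, P i j * w1 j := rfl
    rw [this]
    calc ∑ j, P i j * w1 j ≤ ∑ j, P i j * M :=
          Finset.sum_le_sum fun j _ => mul_le_mul_of_nonneg_left (hw1M j) (hP i j)
      _ = (∑ j, P i j) * M := by rw [Finset.sum_mul]
      _ ≤ 1 * M := mul_le_mul_of_nonneg_right (hrow i) hM0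
      _ = M := one_mul M
  -- Step (c'): w1 i ≤ w2 i + (γ/(1+γ)) * M
  have hc : ∀ i, w1 i ≤ w2 i + (γ / (1 + γ)) * M := by
    set c : ℝ := γ / (1 + γ) with hcdef
    have hcnn : 0 ≤ c := div_nonneg hγ0' (by linarith)
    have hceq : c * (1 - γ ^ 2) = γ * (1 - γ) := by
      rw [hcdef, div_mul_eq_mul_div, div_eq_iff (by linarith)]
      ring
    set x : Fin n → ℝ := fun i => w2 i + c * M - w1 i with hx
    have hkey : ∀ i, 0 ≤ x i - γ ^ 2 * (P.mulVec x) i := by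
      intro i
      have hlin : P.mulVec x i
          = P.mulVec w2 i + (∑ j, P i j) * (c * M) - P.mulVec w1 i := by
        show ∑ j, P i j * x j = _
        simp only [hx]
        rw [Finset.sum_mul]
        rw [show (P.mulVec w2 i : ℝ) = ∑ j, P i j * w2 j from rfl,
            show (P.mulVec w1 i : ℝ) = ∑ j, P i j * w1 j from rfl]
        rw [← Finset.sum_add_distrib, ← Finset.sum_sub_distrib]
        congr 1
        ext j
        ring
      have hrsum : (∑ j, P i j) * (c * M) ≤ 1 * (c * M) :=
        mul_le_mul_of_nonneg_right (hrow i) (mul_nonneg hcnn hM0)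
      have hrsum0 : 0 ≤ ∑ j, P i j := Finset.sum_nonneg fun j _ => hP i j
      have e1 := eqw1 i
      have e2 := eqw2 i
      have hb := hPw1M i
      have h4 : γ ^ 2 * ((∑ j, P i j) * (c * M)) ≤ γ ^ 2 * (1 * (c * M)) :=
        mul_le_mul_of_nonneg_left hrsum hγ20
      have h5 : γ * (1 - γ) * P.mulVec w1 i ≤ γ * (1 - γ) * M :=
        mul_le_mul_of_nonneg_left hb (mul_nonneg hγ0' (le_of_lt h1γ))
      have h6 : c * (1 - γ ^ 2) * M = γ * (1 - γ) * M := by rw [hceq]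
      have h7 : w2 i + c * M - w1 i - γ ^ 2 * (P.mulVec w2 i + (∑ j, P i j) * (c * M) - P.mulVec w1 i)
          = (γ ^ 2 * (1 * (c * M)) - γ ^ 2 * ((∑ j, P i j) * (c * M)))
            + (c * (1 - γ ^ 2) * M - γ * (1 - γ) * P.mulVec w1 i)
            + (w2 i - v i - γ ^ 2 * P.mulVec w2 i)
            - (w1 i - v i - γ * P.mulVec w1 i) := by ring
      rw [hlin]; simp only [hx]
      rw [h7]
      have e1' : w1 i - v i - γ * P.mulVec w1 i = 0 := by linarith
      have e2' : w2 i - v i - γ ^ 2 * P.mulVec w2 i = 0 := by linarith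
      rw [e1', e2']
      linarith
    have := stmt3_min_principle P hP hrow hγ20 hγ21 x hkey
    intro i
    have := this i
    simp only [hx] at this
    linarith
  -- norm bound : M ≤ (1+γ) ‖w2‖
  have hw2n : ∀ i, w2 i ≤ ‖w2‖ := by
    intro i
    calc w2 i ≤ |w2 i| := le_abs_self _
      _ ≤ ‖w2‖ := norm_le_pi_norm w2 i
  have hMw2 : M ≤ (1 + γ) * ‖w2‖ := by
    have hMle : M ≤ ‖w2‖ + (γ / (1 + γ)) * M := by
      rcases isEmpty_or_nonempty (Fin n) with hemp | hne
      · have : M = 0 := by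
          rw [hM]
          simp [Subsingleton.elim w1 0]
        rw [this]
        positivity
      · rw [hM]
        rw [pi_norm_le_iff_of_nonneg]
        · intro i
          rw [Real.norm_eq_abs, abs_of_nonneg (hw10 i)]
          calc w1 i ≤ w2 i + (γ / (1 + γ)) * M := hc i
            _ ≤ ‖w2‖ + (γ / (1 + γ)) * M := by linarith [hw2n i]
        · positivity
    have h1γ' : (0:ℝ) < 1 + γ := by linarith
    have h2 : M * (1 + γ) ≤ (‖w2‖ + γ / (1 + γ) * M) * (1 + γ) :=
      mul_le_mul_of_nonneg_right hMle (le_of_lt h1γ')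
    have h3 : (‖w2‖ + γ / (1 + γ) * M) * (1 + γ) = ‖w2‖ * (1 + γ) + γ * M := by
      field_simp
    rw [h3] at h2
    nlinarith [h2]
  -- Step (b): u i ≤ sqrt (w1 i / (1 - γ))
  set t : ℝ := 1 / (1 - γ) with ht
  have ht0 : 0 < t := by positivity
  have ht0' : (0:ℝ) ≤ t := le_of_lt ht0
  have ht1 : t * (1 - γ) = 1 := by
    rw [ht]; field_simp
  have hb : ∀ i, u i ≤ Real.sqrt (t * w1 i) := by
    set c : Fin n → ℝ := fun j => Real.sqrt (t * w1 j) with hcdef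
    have hcnn : ∀ j, 0 ≤ c j := fun j => Real.sqrt_nonneg _
    set x : Fin n → ℝ := fun i => c i - u i with hx
    have hkey : ∀ i, 0 ≤ x i - γ * (P.mulVec x) i := by
      intro i
      have hlin : P.mulVec x i = P.mulVec c i - P.mulVec u i := by
        show ∑ j, P i j * x j = (∑ j, P i j * c j) - ∑ j, P i j * u j
        rw [← Finset.sum_sub_distrib]
        congr 1; ext j; simp only [hx]; ring
      have htPw1nn : (0:ℝ) ≤ t * P.mulVec w1 i := mul_nonneg ht0' (hPw1nn i)
      -- Cauchy-Schwarz: (P c) i ≤ sqrt (t * (P w1) i)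
      have hCS : P.mulVec c i ≤ Real.sqrt (t * P.mulVec w1 i) := by
        have hPcnn : 0 ≤ P.mulVec c i := by
          show (0:ℝ) ≤ ∑ j, P i j * c j
          exact Finset.sum_nonneg fun j _ => mul_nonneg (hP i j) (hcnn j)
        rw [Real.le_sqrt hPcnn htPw1nn]
        have hsq := Finset.sum_mul_sq_le_sq_mul_sq Finset.univ
          (fun j => Real.sqrt (P i j)) (fun j => Real.sqrt (P i j * (t * w1 j)))
        have e1 : ∀ j, Real.sqrt (P i j) * Real.sqrt (P i j * (t * w1 j))
            = P i j * c j := by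
          intro j
          rw [← Real.sqrt_mul (hP i j), ← mul_assoc,
            Real.sqrt_mul (mul_nonneg (hP i j) (hP i j)),
            Real.sqrt_mul_self (hP i j)]
        have e2 : ∀ j, Real.sqrt (P i j) ^ 2 = P i j := fun j => Real.sq_sqrt (hP i j)
        have e3 : ∀ j, Real.sqrt (P i j * (t * w1 j)) ^ 2 = P i j * (t * w1 j) :=
          fun j => Real.sq_sqrt (mul_nonneg (hP i j) (mul_nonneg ht0' (hw10 j)))
        rw [show (P.mulVec c i : ℝ) = ∑ j, P i j * c j from rfl]
        simp only [e1, e2, e3] at hsq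
        have hsum2 : ∑ j, P i j * (t * w1 j) = t * P.mulVec w1 i := by
          rw [show (P.mulVec w1 i : ℝ) = ∑ j, P i j * w1 j from rfl, Finset.mul_sum]
          congr 1; ext j; ring
        rw [hsum2] at hsq
        calc (∑ j, P i j * c j) ^ 2 ≤ (∑ j, P i j) * (t * P.mulVec w1 i) := hsq
          _ ≤ 1 * (t * P.mulVec w1 i) :=
              mul_le_mul_of_nonneg_right (hrow i) htPw1nn
          _ = t * P.mulVec w1 i := one_mul _
      -- key scalar inequality
      have hscal : s i + γ * Real.sqrt (t * P.mulVec w1 i) ≤ c i := by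
        show s i + γ * Real.sqrt (t * P.mulVec w1 i) ≤ Real.sqrt (t * w1 i)
        set a : ℝ := s i with ha
        set r : ℝ := Real.sqrt (t * P.mulVec w1 i) with hrdef
        have hr0 : 0 ≤ r := Real.sqrt_nonneg _
        have ha0 : 0 ≤ a := hs0 i
        have hr2 : r ^ 2 = t * P.mulVec w1 i := Real.sq_sqrt htPw1nn
        have ha2 : a ^ 2 = v i := Real.sq_sqrt (hv i)
        have hexp2 : t * w1 i = a ^ 2 * t + γ * r ^ 2 := by
          rw [hr2, eqw1 i, ← ha2]; ring
        rw [Real.le_sqrt (add_nonneg ha0 (mul_nonneg hγ0' hr0))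
            (mul_nonneg ht0' (hw10 i))]
        rw [hexp2]
        have ht1a : t * (1 - γ) * a ^ 2 = a ^ 2 := by rw [ht1]; ring
        have ht1r : t * (1 - γ) * r ^ 2 = r ^ 2 := by rw [ht1]; ring
        nlinarith [mul_nonneg hγ0' (sq_nonneg (a - (1 - γ) * r)), ht1a, ht1r,
          sq_nonneg a, sq_nonneg r, h1γ, mul_nonneg ha0 hr0]
      have hPu := equ i
      rw [hlin]; simp only [hx]
      have : γ * P.mulVec c i ≤ γ * Real.sqrt (t * P.mulVec w1 i) :=
        mul_le_mul_of_nonneg_left hCS hγ0'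
      linarith
    have := stmt3_min_principle P hP hrow hγ0' hγ1 x hkey
    intro i
    have h := this i
    simp only [hx] at h
    linarith
  -- final assembly
  have hfinal : ∀ i, u i ≤ Real.sqrt (((1 + γ) / (1 - γ)) * ‖w2‖) := by
    intro i
    calc u i ≤ Real.sqrt (t * w1 i) := hb i
      _ ≤ Real.sqrt (((1 + γ) / (1 - γ)) * ‖w2‖) := by
          apply Real.sqrt_le_sqrt
          have h1 : t * w1 i ≤ t * M := mul_le_mul_of_nonneg_left (hw1M i) (le_of_lt ht0)
          have h2 : t * M ≤ t * ((1 + γ) * ‖w2‖) :=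
            mul_le_mul_of_nonneg_left hMw2 (le_of_lt ht0)
          have h3 : t * ((1 + γ) * ‖w2‖) = ((1 + γ) / (1 - γ)) * ‖w2‖ := by
            rw [ht]; field_simp
          linarith
  rcases isEmpty_or_nonempty (Fin n) with hemp | hne
  · have h0 : ‖u‖ = 0 := by simp [Subsingleton.elim u 0]
    rw [h0]
    exact Real.sqrt_nonneg _
  · rw [pi_norm_le_iff_of_nonneg (Real.sqrt_nonneg _)]
    intro i
    rw [Real.norm_eq_abs, abs_of_nonneg (hu0 i)]
    exact hfinal i
end

section
/- For any stochastic matrix P^π (rows are probability distributions), γ ∈ (0,1), and value vector v^π = (I − γP^π)^{-1} r^π with rewards r^π ∈ [0,1]^S, the total variance vector Σ^π := γ²(I − γ²P^π)^{-1} σ_{v^π}, where σ_{v^π} = P^π (v^π)² − (P^π v^π)² (coordinatewise squares), satisfies Σ^π(s) ≤ (1−γ)^{-2} for every state s. -/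
open Matrix Finset

private lemma row_bound {S : Type*} [Fintype S]
    (P : Matrix S S ℝ) (hP : ∀ s s', 0 ≤ P s s') (hrow : ∀ s, ∑ s', P s s' = 1)
    (x : S → ℝ) (M : ℝ) (hx : ∀ s', x s' ≤ M) (s : S) :
    P.mulVec x s ≤ M := by
  have h : P.mulVec x s = ∑ s', P s s' * x s' := rfl
  rw [h]
  calc ∑ s', P s s' * x s' ≤ ∑ s', P s s' * M :=
        Finset.sum_le_sum (fun s' _ => mul_le_mul_of_nonneg_left (hx s') (hP s s'))
    _ = M := by rw [← Finset.sum_mul, hrow, one_mul]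

private lemma row_lb {S : Type*} [Fintype S]
    (P : Matrix S S ℝ) (hP : ∀ s s', 0 ≤ P s s') (hrow : ∀ s, ∑ s', P s s' = 1)
    (x : S → ℝ) (m : ℝ) (hx : ∀ s', m ≤ x s') (s : S) :
    m ≤ P.mulVec x s := by
  have h : P.mulVec x s = ∑ s', P s s' * x s' := rfl
  rw [h]
  calc m = ∑ s', P s s' * m := by rw [← Finset.sum_mul, hrow, one_mul]
    _ ≤ ∑ s', P s s' * x s' :=
        Finset.sum_le_sum (fun s' _ => mul_le_mul_of_nonneg_left (hx s') (hP s s'))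

private lemma max_principle {S : Type*} [Fintype S] [Nonempty S]
    (P : Matrix S S ℝ) (hP : ∀ s s', 0 ≤ P s s') (hrow : ∀ s, ∑ s', P s s' = 1)
    (β C : ℝ) (hβ0 : 0 ≤ β) (hβ1 : β < 1)
    (x c : S → ℝ) (hx : ∀ s, x s = c s + β * P.mulVec x s) (hc : ∀ s, c s ≤ C) :
    ∀ s, x s ≤ C / (1 - β) := by
  obtain ⟨s0, -, hs0⟩ := Finset.exists_max_image Finset.univ x Finset.univ_nonempty
  have h1 : P.mulVec x s0 ≤ x s0 :=
    row_bound P hP hrow x (x s0) (fun s' => hs0 s' (Finset.mem_univ _)) s0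
  have h2 : x s0 ≤ C + β * x s0 := by
    have := mul_le_mul_of_nonneg_left h1 hβ0
    have hx0 := hx s0
    linarith [hc s0]
  have h3 : x s0 ≤ C / (1 - β) := by
    rw [le_div_iff₀ (by linarith)]
    nlinarith
  exact fun s => le_trans (hs0 s (Finset.mem_univ _)) h3

private lemma min_principle {S : Type*} [Fintype S] [Nonempty S]
    (P : Matrix S S ℝ) (hP : ∀ s s', 0 ≤ P s s') (hrow : ∀ s, ∑ s', P s s' = 1)
    (β : ℝ) (hβ0 : 0 ≤ β) (hβ1 : β < 1)
    (x c : S → ℝ) (hx : ∀ s, x s = c s + β * P.mulVec x s) (hc : ∀ s, 0 ≤ c s) :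
    ∀ s, 0 ≤ x s := by
  obtain ⟨s0, -, hs0⟩ := Finset.exists_min_image Finset.univ x Finset.univ_nonempty
  have h1 : x s0 ≤ P.mulVec x s0 :=
    row_lb P hP hrow x (x s0) (fun s' => hs0 s' (Finset.mem_univ _)) s0
  have h2 : 0 ≤ x s0 := by
    have := mul_le_mul_of_nonneg_left h1 hβ0
    have hx0 := hx s0
    nlinarith [hc s0]
  exact fun s => le_trans h2 (hs0 s (Finset.mem_univ _))

private lemma mulVec_one_sub_smul {S : Type*} [Fintype S] [DecidableEq S]
    (P : Matrix S S ℝ) (β : ℝ) (w : S → ℝ) (s : S) :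
    (1 - β • P).mulVec w s = w s - β * P.mulVec w s := by
  rw [Matrix.sub_mulVec, Matrix.smul_mulVec, Matrix.one_mulVec]
  simp

private lemma det_unit {S : Type*} [Fintype S] [DecidableEq S]
    (P : Matrix S S ℝ) (hP : ∀ s s', 0 ≤ P s s') (hrow : ∀ s, ∑ s', P s s' = 1)
    (β : ℝ) (hβ0 : 0 ≤ β) (hβ1 : β < 1) :
    IsUnit (1 - β • P).det := by
  rw [isUnit_iff_ne_zero]
  intro hdet
  obtain ⟨w, hw0, hw⟩ := (Matrix.exists_mulVec_eq_zero_iff).mpr hdet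
  have hne : Nonempty S := by
    by_contra h
    exact hw0 (funext fun s => absurd ⟨s⟩ h)
  obtain ⟨s0, -, hs0⟩ :=
    Finset.exists_max_image Finset.univ (fun s => |w s|) Finset.univ_nonempty
  have hpos : 0 < |w s0| := by
    obtain ⟨t, ht⟩ := Function.ne_iff.mp hw0
    have : 0 < |w t| := abs_pos.mpr ht
    exact lt_of_lt_of_le this (hs0 t (Finset.mem_univ _))
  have hkey : w s0 = β * P.mulVec w s0 := by
    have h := congrFun hw s0
    rw [mulVec_one_sub_smul] at h
    simp only [Pi.zero_apply] at h
    linarith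
  have h1 : |P.mulVec w s0| ≤ |w s0| := by
    have heq : P.mulVec w s0 = ∑ s', P s0 s' * w s' := rfl
    rw [heq]
    calc |∑ s', P s0 s' * w s'| ≤ ∑ s', |P s0 s' * w s'| :=
          Finset.abs_sum_le_sum_abs _ _
      _ = ∑ s', P s0 s' * |w s'| := by
          refine Finset.sum_congr rfl fun s' _ => ?_
          rw [abs_mul, abs_of_nonneg (hP s0 s')]
      _ ≤ ∑ s', P s0 s' * |w s0| :=
          Finset.sum_le_sum fun s' _ =>
            mul_le_mul_of_nonneg_left (hs0 s' (Finset.mem_univ _)) (hP s0 s')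
      _ = |w s0| := by rw [← Finset.sum_mul, hrow, one_mul]
  have h2 : |w s0| ≤ β * |w s0| := by
    calc |w s0| = β * |P.mulVec w s0| := by rw [hkey, abs_mul, abs_of_nonneg hβ0]
      _ ≤ β * |w s0| := mul_le_mul_of_nonneg_left h1 hβ0
  nlinarith

theorem stmt_4 {S : Type*} [Fintype S] [DecidableEq S]
    (P : Matrix S S ℝ) (r : S → ℝ) (γ : ℝ)
    (hP : ∀ s s', 0 ≤ P s s') (hrow : ∀ s, ∑ s', P s s' = 1)
    (hγ : γ ∈ Set.Ioo (0 : ℝ) 1) (hr : ∀ s, r s ∈ Set.Icc (0 : ℝ) 1)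
    (v : S → ℝ) (hv : v = (1 - γ • P)⁻¹.mulVec r)
    (σ : S → ℝ)
    (hσ : ∀ s, σ s = P.mulVec (fun s' => (v s') ^ 2) s - (P.mulVec v s) ^ 2)
    (Sig : S → ℝ) (hSig : Sig = γ ^ 2 • (1 - (γ ^ 2) • P)⁻¹.mulVec σ) :
    ∀ s, Sig s ≤ ((1 - γ)⁻¹) ^ 2 := by
  intro s
  have hne : Nonempty S := ⟨s⟩
  obtain ⟨hγ0, hγ1⟩ := hγ
  have hγγ0 : (0:ℝ) ≤ γ ^ 2 := sq_nonneg γ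
  have hγγ1 : γ ^ 2 < 1 := by nlinarith
  have h1γ : (0:ℝ) < 1 - γ := by linarith
  -- Bellman equation for v
  have hdet1 := det_unit P hP hrow γ (le_of_lt hγ0) hγ1
  have hAv : (1 - γ • P).mulVec v = r := by
    rw [hv, Matrix.mulVec_mulVec, Matrix.mul_nonsing_inv _ hdet1, Matrix.one_mulVec]
  have hvBell : ∀ t, v t = r t + γ * P.mulVec v t := by
    intro t
    have h := congrFun hAv t
    rw [mulVec_one_sub_smul] at h
    linarith
  -- bounds on v
  have hvU : ∀ t, v t ≤ (1 - γ)⁻¹ := by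
    have := max_principle P hP hrow γ 1 (le_of_lt hγ0) hγ1 v r hvBell
      (fun t => (hr t).2)
    intro t
    have h := this t
    rwa [one_div] at h
  have hvL : ∀ t, 0 ≤ v t :=
    min_principle P hP hrow γ (le_of_lt hγ0) hγ1 v r hvBell (fun t => (hr t).1)
  have hPvU : ∀ t, P.mulVec v t ≤ (1 - γ)⁻¹ := fun t =>
    row_bound P hP hrow v _ hvU t
  have hPvL : ∀ t, 0 ≤ P.mulVec v t := fun t =>
    row_lb P hP hrow v 0 hvL t
  -- Bellman equation for Sig
  have hdet2 := det_unit P hP hrow (γ ^ 2) hγγ0 hγγ1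
  set u : S → ℝ := (1 - (γ ^ 2) • P)⁻¹.mulVec σ with hu
  have hAu : (1 - (γ ^ 2) • P).mulVec u = σ := by
    rw [hu, Matrix.mulVec_mulVec, Matrix.mul_nonsing_inv _ hdet2, Matrix.one_mulVec]
  have huBell : ∀ t, u t = σ t + γ ^ 2 * P.mulVec u t := by
    intro t
    have h := congrFun hAu t
    rw [mulVec_one_sub_smul] at h
    linarith
  have hSigt : ∀ t, Sig t = γ ^ 2 * u t := by
    intro t; rw [hSig]; simp [smul_eq_mul]
  have hPS : ∀ t, P.mulVec Sig t = γ ^ 2 * P.mulVec u t := by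
    intro t
    show (∑ s', P t s' * Sig s') = γ ^ 2 * ∑ s', P t s' * u s'
    rw [Finset.mul_sum]
    exact Finset.sum_congr rfl fun s' _ => by rw [hSigt s']; ring
  have hSigBell : ∀ t, Sig t = γ ^ 2 * σ t + γ ^ 2 * P.mulVec Sig t := by
    intro t
    rw [hSigt t, huBell t, hPS t]
    ring
  -- y = Sig + v^2 satisfies Bellman-type equation
  set y : S → ℝ := fun t => Sig t + v t ^ 2 with hy
  have hPy : ∀ t, P.mulVec y t = P.mulVec Sig t + P.mulVec (fun s' => v s' ^ 2) t := by
    intro t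
    show (∑ s', P t s' * y s') = (∑ s', P t s' * Sig s') + ∑ s', P t s' * v s' ^ 2
    rw [← Finset.sum_add_distrib]
    exact Finset.sum_congr rfl fun s' _ => by
      show P t s' * (Sig s' + v s' ^ 2) = _
      ring
  set c : S → ℝ := fun t => r t ^ 2 + 2 * γ * r t * P.mulVec v t with hc
  have hyBell : ∀ t, y t = c t + γ ^ 2 * P.mulVec y t := by
    intro t
    show Sig t + v t ^ 2 = r t ^ 2 + 2 * γ * r t * P.mulVec v t + γ ^ 2 * P.mulVec y t
    rw [hPy t, hSigBell t, hσ t]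
    rw [hvBell t]
    ring
  set C : ℝ := 1 + 2 * γ * (1 - γ)⁻¹ with hC
  have hcb : ∀ t, c t ≤ C := by
    intro t
    obtain ⟨hr0, hr1⟩ := hr t
    have h5 := hPvU t
    have h6 := hPvL t
    have hi : (0:ℝ) ≤ (1 - γ)⁻¹ := le_of_lt (inv_pos.mpr h1γ)
    show r t ^ 2 + 2 * γ * r t * P.mulVec v t ≤ 1 + 2 * γ * (1 - γ)⁻¹
    nlinarith [mul_le_mul hr1 h5 h6 zero_le_one, mul_nonneg hr0 h6]
  have hyb := max_principle P hP hrow (γ ^ 2) C hγγ0 hγγ1 y c hyBell hcb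
  have hfinal : C / (1 - γ ^ 2) = ((1 - γ)⁻¹) ^ 2 := by
    have h4 : (1:ℝ) - γ ^ 2 ≠ 0 := by nlinarith
    have h3 : (1:ℝ) - γ ≠ 0 := ne_of_gt h1γ
    rw [div_eq_iff h4, hC]
    field_simp
    ring
  have hyb2 : y s ≤ ((1 - γ)⁻¹) ^ 2 := by rw [← hfinal]; exact hyb s
  have : Sig s ≤ y s := by
    show Sig s ≤ Sig s + v s ^ 2
    nlinarith [sq_nonneg (v s)]
  exact le_trans this hyb2
end

section
/- Let P^π be a stochastic matrix, γ ∈ (0,1), rewards r^π ∈ [0,1]^S, and v^π = (I − γP^π)^{-1} r^π. Let σ_{v^π} = P^π (v^π)² − (P^π v^π)² be the one-step variance vector. Then ‖(I − γP^π)^{-1} √(σ_{v^π})‖_∞² ≤ (1+γ)/(γ²(1−γ)³). -/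
open Finset Matrix

section Aux
variable {S : Type*} [Fintype S] [DecidableEq S]

private lemma aux_mulVec (P : Matrix S S ℝ) (c : ℝ) (x : S → ℝ) (s : S) :
    (1 - c • P).mulVec x s = x s - c * P.mulVec x s := by
  have : (1 - c • P).mulVec x = x - c • P.mulVec x := by
    rw [Matrix.sub_mulVec, Matrix.one_mulVec, Matrix.smul_mulVec]
  rw [this]; simp

private lemma aux_stoch_ub {P : Matrix S S ℝ} (hP : ∀ s s', 0 ≤ P s s')
    (hrow : ∀ s, ∑ s', P s s' = 1) {x : S → ℝ} {C : ℝ}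
    (hx : ∀ i, x i ≤ C) (s : S) : P.mulVec x s ≤ C := by
  have : P.mulVec x s = ∑ i, P s i * x i := rfl
  rw [this]
  calc ∑ i, P s i * x i ≤ ∑ i, P s i * C :=
        Finset.sum_le_sum fun i _ => mul_le_mul_of_nonneg_left (hx i) (hP s i)
    _ = C := by rw [← Finset.sum_mul, hrow]; ring

private lemma aux_stoch_lb {P : Matrix S S ℝ} (hP : ∀ s s', 0 ≤ P s s')
    (hrow : ∀ s, ∑ s', P s s' = 1) {x : S → ℝ} {C : ℝ}
    (hx : ∀ i, C ≤ x i) (s : S) : C ≤ P.mulVec x s := by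
  have : P.mulVec x s = ∑ i, P s i * x i := rfl
  rw [this]
  calc C = ∑ i, P s i * C := by rw [← Finset.sum_mul, hrow]; ring
    _ ≤ ∑ i, P s i * x i :=
        Finset.sum_le_sum fun i _ => mul_le_mul_of_nonneg_left (hx i) (hP s i)

private lemma aux_unit {P : Matrix S S ℝ} (hP : ∀ s s', 0 ≤ P s s')
    (hrow : ∀ s, ∑ s', P s s' = 1) {c : ℝ} (hc0 : 0 ≤ c) (hc1 : c < 1) :
    IsUnit (1 - c • P).det := by
  rw [isUnit_iff_ne_zero]
  intro hdet
  obtain ⟨x, hx0, hx⟩ := (Matrix.exists_mulVec_eq_zero_iff).2 hdet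
  obtain ⟨s, hs⟩ := Function.ne_iff.1 hx0
  obtain ⟨t, -, ht⟩ := Finset.exists_max_image Finset.univ (fun i => |x i|) ⟨s, Finset.mem_univ s⟩
  have h1 : x t - c * P.mulVec x t = 0 := by
    have := congrFun hx t; rw [aux_mulVec] at this; simpa using this
  have h2 : |P.mulVec x t| ≤ |x t| := by
    have : P.mulVec x t = ∑ i, P t i * x i := rfl
    rw [this]
    calc |∑ i, P t i * x i| ≤ ∑ i, |P t i * x i| := Finset.abs_sum_le_sum_abs _ _
      _ ≤ ∑ i, P t i * |x t| := Finset.sum_le_sum fun i _ => by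
          rw [abs_mul, abs_of_nonneg (hP t i)]
          exact mul_le_mul_of_nonneg_left (ht i (Finset.mem_univ i)) (hP t i)
      _ = |x t| := by rw [← Finset.sum_mul, hrow]; ring
  have h3 : |x t| ≤ c * |x t| := by
    have hxe : x t = c * P.mulVec x t := by linarith
    calc |x t| = c * |P.mulVec x t| := by rw [hxe, abs_mul, abs_of_nonneg hc0]
      _ ≤ c * |x t| := mul_le_mul_of_nonneg_left h2 hc0
  have h4 : 0 < |x t| := lt_of_lt_of_le (abs_pos.2 hs) (ht s (Finset.mem_univ s))
  nlinarith

private lemma aux_cancel₁ {P : Matrix S S ℝ} (hP : ∀ s s', 0 ≤ P s s')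
    (hrow : ∀ s, ∑ s', P s s' = 1) {c : ℝ} (hc0 : 0 ≤ c) (hc1 : c < 1) (b : S → ℝ) :
    (1 - c • P).mulVec ((1 - c • P)⁻¹.mulVec b) = b := by
  rw [Matrix.mulVec_mulVec, Matrix.mul_nonsing_inv _ (aux_unit hP hrow hc0 hc1),
    Matrix.one_mulVec]

private lemma aux_cancel₂ {P : Matrix S S ℝ} (hP : ∀ s s', 0 ≤ P s s')
    (hrow : ∀ s, ∑ s', P s s' = 1) {c : ℝ} (hc0 : 0 ≤ c) (hc1 : c < 1) (b : S → ℝ) :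
    (1 - c • P)⁻¹.mulVec ((1 - c • P).mulVec b) = b := by
  rw [Matrix.mulVec_mulVec, Matrix.nonsing_inv_mul _ (aux_unit hP hrow hc0 hc1),
    Matrix.one_mulVec]

private lemma aux_inv_nonneg {P : Matrix S S ℝ} (hP : ∀ s s', 0 ≤ P s s')
    (hrow : ∀ s, ∑ s', P s s' = 1) {c : ℝ} (hc0 : 0 ≤ c) (hc1 : c < 1) {b : S → ℝ}
    (hb : ∀ i, 0 ≤ b i) : ∀ s, 0 ≤ (1 - c • P)⁻¹.mulVec b s := by
  intro s
  set x := (1 - c • P)⁻¹.mulVec b with hxdef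
  have hAx : ∀ u, x u - c * P.mulVec x u = b u := by
    intro u
    have := congrFun (aux_cancel₁ hP hrow hc0 hc1 b) u
    rw [aux_mulVec] at this
    exact this
  obtain ⟨t, -, ht⟩ := Finset.exists_min_image Finset.univ x ⟨s, Finset.mem_univ s⟩
  have h1 : x t ≤ P.mulVec x t := aux_stoch_lb hP hrow (fun i => ht i (Finset.mem_univ i)) t
  have h2 := hAx t
  have hbt := hb t
  have hxt : 0 ≤ x t := by nlinarith [mul_le_mul_of_nonneg_left h1 hc0]
  exact le_trans hxt (ht s (Finset.mem_univ s))

private lemma aux_mulVec_sub (M : Matrix S S ℝ) (x y : S → ℝ) (s : S) :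
    M.mulVec (x - y) s = M.mulVec x s - M.mulVec y s := by
  simp [Matrix.mulVec, dotProduct, mul_sub, Finset.sum_sub_distrib]

private lemma aux_inv_mono {P : Matrix S S ℝ} (hP : ∀ s s', 0 ≤ P s s')
    (hrow : ∀ s, ∑ s', P s s' = 1) {c : ℝ} (hc0 : 0 ≤ c) (hc1 : c < 1) {b₁ b₂ : S → ℝ}
    (h : ∀ i, b₁ i ≤ b₂ i) : ∀ s, (1 - c • P)⁻¹.mulVec b₁ s ≤ (1 - c • P)⁻¹.mulVec b₂ s := by
  intro s
  have := aux_inv_nonneg hP hrow hc0 hc1 (b := b₂ - b₁)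
    (fun i => by simpa using sub_nonneg.2 (h i)) s
  rw [aux_mulVec_sub] at this
  linarith

private lemma aux_inv_const {P : Matrix S S ℝ} (hP : ∀ s s', 0 ≤ P s s')
    (hrow : ∀ s, ∑ s', P s s' = 1) {c : ℝ} (hc0 : 0 ≤ c) (hc1 : c < 1) (k : ℝ) :
    (1 - c • P)⁻¹.mulVec (fun _ => k) = fun _ => k / (1 - c) := by
  have hkey : (1 - c • P).mulVec (fun _ => k / (1 - c)) = fun _ => k := by
    funext s
    rw [aux_mulVec]
    have : P.mulVec (fun _ => k / (1 - c)) s = k / (1 - c) := by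
      have hub := aux_stoch_ub hP hrow (x := fun _ => k / (1 - c)) (C := k / (1 - c))
        (fun i => le_refl _) s
      have hlb := aux_stoch_lb hP hrow (x := fun _ => k / (1 - c)) (C := k / (1 - c))
        (fun i => le_refl _) s
      linarith
    rw [this]
    have hne : (1:ℝ) - c ≠ 0 := by linarith
    field_simp
  conv_lhs => rw [← hkey]
  exact aux_cancel₂ hP hrow hc0 hc1 _

private lemma aux_inv_entry_nonneg {P : Matrix S S ℝ} (hP : ∀ s s', 0 ≤ P s s')
    (hrow : ∀ s, ∑ s', P s s' = 1) {c : ℝ} (hc0 : 0 ≤ c) (hc1 : c < 1) (s t : S) :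
    0 ≤ (1 - c • P)⁻¹ s t := by
  have h0 := aux_inv_nonneg hP hrow hc0 hc1 (b := Pi.single t 1)
    (fun i => by rcases eq_or_ne i t with h | h <;> simp [Pi.single_apply, h]) s
  have he : (1 - c • P)⁻¹.mulVec (Pi.single t 1) s = (1 - c • P)⁻¹ s t := by
    rw [Matrix.mulVec_single]
    exact mul_one _
  rwa [he] at h0

private lemma aux_arith1 (γ M W U : ℝ) (hγ : 0 < γ) (h1 : γ ^ 2 * W ≤ U)
    (h2 : U ≤ M ^ 2 / 4) : W ≤ M ^ 2 / (4 * γ ^ 2) := by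
  rw [le_div_iff₀ (by positivity : (0:ℝ) < 4 * γ ^ 2)]
  nlinarith

end Aux

set_option maxHeartbeats 1000000 in
theorem stmt_5 {S : Type*} [Fintype S] [DecidableEq S]
    (P : Matrix S S ℝ) (r : S → ℝ) (γ : ℝ)
    (hP : ∀ s s', 0 ≤ P s s') (hrow : ∀ s, ∑ s', P s s' = 1)
    (hγ : γ ∈ Set.Ioo (0 : ℝ) 1) (hr : ∀ s, r s ∈ Set.Icc (0 : ℝ) 1)
    (v : S → ℝ) (hv : v = (1 - γ • P)⁻¹.mulVec r)
    (σ : S → ℝ)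
    (hσ : ∀ s, σ s = P.mulVec (fun s' => (v s') ^ 2) s - (P.mulVec v s) ^ 2) :
    ‖(1 - γ • P)⁻¹.mulVec (fun s => Real.sqrt (σ s))‖ ^ 2 ≤
      (1 + γ) / (γ ^ 2 * (1 - γ) ^ 3) := by
  obtain ⟨hγ0, hγ1⟩ := hγ
  have hγ0' : (0:ℝ) ≤ γ := le_of_lt hγ0
  have h1γ : (0:ℝ) < 1 - γ := by linarith
  have hc20 : (0:ℝ) ≤ γ ^ 2 := sq_nonneg γ
  have hc21 : γ ^ 2 < 1 := by nlinarith
  set M : ℝ := 1 / (1 - γ) with hM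
  have h1γ' : (1:ℝ) - γ ≠ 0 := ne_of_gt h1γ
  have hM1 : (1 - γ) * M = 1 := by rw [hM]; field_simp
  have hMpos : 0 < M := by positivity
  -- Bellman equation
  have hbell : ∀ s, v s - γ * P.mulVec v s = r s := by
    intro s
    have := congrFun (aux_cancel₁ hP hrow hγ0' hγ1 r) s
    rw [← hv] at this
    rw [← this, aux_mulVec]
  -- bounds on v
  have hv0 : ∀ s, 0 ≤ v s := by
    have := aux_inv_nonneg hP hrow hγ0' hγ1 (b := r) (fun i => (hr i).1)
    intro s; rw [hv]; exact this s
  have hvr : ∀ s, r s ≤ v s := by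
    intro s
    have := aux_stoch_lb hP hrow (x := v) (C := 0) hv0 s
    have hb := hbell s
    nlinarith
  have hvM : ∀ s, v s ≤ M := by
    intro s
    have hmono := aux_inv_mono hP hrow hγ0' hγ1 (b₁ := r) (b₂ := fun _ => 1)
      (fun i => (hr i).2) s
    rw [aux_inv_const hP hrow hγ0' hγ1 1] at hmono
    rw [hv]; simpa [hM] using hmono
  -- σ is nonnegative
  have hσ0 : ∀ s, 0 ≤ σ s := by
    intro s
    rw [hσ s]
    have hcs := Finset.sum_mul_sq_le_sq_mul_sq Finset.univ
      (fun i => Real.sqrt (P s i)) (fun i => Real.sqrt (P s i) * v i)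
    have e1 : ∀ i, Real.sqrt (P s i) * (Real.sqrt (P s i) * v i) = P s i * v i := by
      intro i; rw [← mul_assoc, Real.mul_self_sqrt (hP s i)]
    have e2 : ∀ i, Real.sqrt (P s i) ^ 2 = P s i := fun i => Real.sq_sqrt (hP s i)
    have e3 : ∀ i, (Real.sqrt (P s i) * v i) ^ 2 = P s i * v i ^ 2 := by
      intro i; rw [mul_pow, e2]
    rw [Finset.sum_congr rfl (fun i _ => e1 i), Finset.sum_congr rfl (fun i _ => e2 i),
      Finset.sum_congr rfl (fun i _ => e3 i), hrow, one_mul] at hcs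
    have h4 : P.mulVec v s = ∑ i, P s i * v i := rfl
    have h5 : P.mulVec (fun s' => v s' ^ 2) s = ∑ i, P s i * v i ^ 2 := rfl
    rw [h4, h5]; linarith
  -- w := (1 - γ²P)⁻¹ σ ;  key bound : γ² * w s ≤ M * v s - v s ^ 2
  set w : S → ℝ := (1 - (γ ^ 2) • P)⁻¹.mulVec σ with hw
  set u : S → ℝ := fun i => M * v i - v i ^ 2 with hu
  have hPu : ∀ s, P.mulVec u s = M * P.mulVec v s - P.mulVec (fun i => v i ^ 2) s := by
    intro s
    have : P.mulVec u s = ∑ i, P s i * (M * v i - v i ^ 2) := rfl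
    rw [this]
    have h4 : P.mulVec v s = ∑ i, P s i * v i := rfl
    have h5 : P.mulVec (fun s' => v s' ^ 2) s = ∑ i, P s i * v i ^ 2 := rfl
    rw [h4, h5, Finset.mul_sum, ← Finset.sum_sub_distrib]
    exact Finset.sum_congr rfl fun i _ => by ring
  have hkey : ∀ s, γ ^ 2 * σ s ≤ (1 - (γ ^ 2) • P).mulVec u s := by
    intro s
    rw [aux_mulVec, hPu s, hσ s]
    set p := P.mulVec v s with hp
    set q := P.mulVec (fun s' => v s' ^ 2) s with hq
    have hbp : γ * p = v s - r s := by have := hbell s; linarith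
    -- reduces to : (v-r)^2 + M*v - v^2 - γ*M*(v-r) ≥ 0
    have hineq : 0 ≤ (v s - r s) ^ 2 + M * v s - v s ^ 2 - γ * M * (v s - r s) := by
      have hr0 := (hr s).1
      have hr1 := (hr s).2
      have hv1 := hvr s
      have hv2 := hvM s
      rcases le_or_gt (r s) (1 / 2) with hcase | hcase
      · -- (1-γ) * expr = (1-γ)*v*(1-2r) + (1-γ)*r^2 + γ*r ≥ 0
        nlinarith [mul_nonneg (mul_nonneg h1γ.le (hv0 s)) (by linarith : (0:ℝ) ≤ 1 - 2 * r s),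
          mul_nonneg h1γ.le (sq_nonneg (r s)), mul_nonneg hγ0' hr0]
      · nlinarith [mul_nonneg (by linarith : (0:ℝ) ≤ 1 - r s)
            (by nlinarith : (0:ℝ) ≤ 1 - (1 - γ) * r s),
          mul_nonneg (by linarith : (0:ℝ) ≤ 2 * r s - 1)
            (by nlinarith : (0:ℝ) ≤ 1 - (1 - γ) * v s)]
    have e1 : γ ^ 2 * p ^ 2 = (v s - r s) ^ 2 := by
      linear_combination (γ * p + v s - r s) * hbp
    have e2 : γ ^ 2 * (M * p) = γ * M * (v s - r s) := by linear_combination γ * M * hbp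
    show γ ^ 2 * (q - p ^ 2) ≤ (M * v s - v s ^ 2) - γ ^ 2 * (M * p - q)
    nlinarith [hineq, e1, e2]
  have hwkey : ∀ s, γ ^ 2 * w s ≤ u s := by
    intro s
    have hmono := aux_inv_mono hP hrow hc20 hc21 (b₁ := fun i => γ ^ 2 * σ i)
      (b₂ := (1 - (γ ^ 2) • P).mulVec u) hkey s
    rw [aux_cancel₂ hP hrow hc20 hc21 u] at hmono
    have hsmul : (1 - (γ ^ 2) • P)⁻¹.mulVec (fun i => γ ^ 2 * σ i) s = γ ^ 2 * w s := by
      have : (fun i => γ ^ 2 * σ i) = (γ ^ 2) • σ := by funext i; simp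
      rw [this, Matrix.mulVec_smul]; rfl
    rw [hsmul] at hmono
    exact hmono
  have hwub : ∀ s, w s ≤ M ^ 2 / (4 * γ ^ 2) := by
    intro s
    have h1 := hwkey s
    have h2 : u s ≤ M ^ 2 / 4 := by
      have := sq_nonneg (M - 2 * v s); simp only [hu]; nlinarith
    exact aux_arith1 γ M (w s) (u s) hγ0 h1 h2
  have hw0 : ∀ s, 0 ≤ w s := aux_inv_nonneg hP hrow hc20 hc21 hσ0
  -- z := (1 - γP)⁻¹ σ
  set z : S → ℝ := (1 - γ • P)⁻¹.mulVec σ with hz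
  have hz0 : ∀ s, 0 ≤ z s := aux_inv_nonneg hP hrow hγ0' hγ1 hσ0
  have hzbell : ∀ s, z s - γ * P.mulVec z s = σ s := by
    intro s
    have h7 := congrFun (aux_cancel₁ hP hrow hγ0' hγ1 σ) s
    rw [aux_mulVec] at h7
    exact h7
  have hzn : ∀ s, z s ≤ ‖z‖ := by
    intro s
    calc z s ≤ |z s| := le_abs_self _
      _ = ‖z s‖ := rfl
      _ ≤ ‖z‖ := norm_le_pi_norm z s
  -- B z ≤ σ + γ(1-γ)‖z‖ pointwise
  have hBz : ∀ s, (1 - (γ ^ 2) • P).mulVec z s ≤ σ s + (γ - γ ^ 2) * ‖z‖ := by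
    intro s
    rw [aux_mulVec]
    have hPz : P.mulVec z s ≤ ‖z‖ := aux_stoch_ub hP hrow hzn s
    have hPz0 : 0 ≤ P.mulVec z s := aux_stoch_lb hP hrow (C := 0) hz0 s
    have hze := hzbell s
    nlinarith [mul_nonneg (show (0:ℝ) ≤ γ - γ ^ 2 by nlinarith)
      (sub_nonneg.2 hPz)]
  have hzw : ∀ s, z s ≤ w s + (γ / (1 + γ)) * ‖z‖ := by
    intro s
    have hmono := aux_inv_mono hP hrow hc20 hc21 (b₁ := (1 - (γ ^ 2) • P).mulVec z)
      (b₂ := fun i => σ i + (γ - γ ^ 2) * ‖z‖) hBz s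
    rw [aux_cancel₂ hP hrow hc20 hc21 z] at hmono
    have hadd : (1 - (γ ^ 2) • P)⁻¹.mulVec (fun i => σ i + (γ - γ ^ 2) * ‖z‖) s
        = w s + (γ - γ ^ 2) * ‖z‖ / (1 - γ ^ 2) := by
      have h1 : (fun i => σ i + (γ - γ ^ 2) * ‖z‖)
          = σ + (fun _ => (γ - γ ^ 2) * ‖z‖) := by funext i; simp
      rw [h1, Matrix.mulVec_add, aux_inv_const hP hrow hc20 hc21]
      rfl
    rw [hadd] at hmono
    have h3 : (1:ℝ) - γ ^ 2 ≠ 0 := by nlinarith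
    have h4 : (1:ℝ) + γ ≠ 0 := by linarith
    have heq : (γ - γ ^ 2) * ‖z‖ / (1 - γ ^ 2) = γ / (1 + γ) * ‖z‖ := by
      field_simp
      ring
    rw [heq] at hmono
    exact hmono
  -- norm bound on z
  have hznorm : ‖z‖ ≤ (1 + γ) * (M ^ 2 / (4 * γ ^ 2)) := by
    have hT : (0:ℝ) ≤ M ^ 2 / (4 * γ ^ 2) + γ / (1 + γ) * ‖z‖ := by positivity
    have hb : ‖z‖ ≤ M ^ 2 / (4 * γ ^ 2) + γ / (1 + γ) * ‖z‖ := by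
      rw [pi_norm_le_iff_of_nonneg hT]
      intro s
      rw [Real.norm_eq_abs, abs_of_nonneg (hz0 s)]
      have := hzw s
      have := hwub s
      linarith
    have h5 : (0:ℝ) < 1 + γ := by linarith
    have h8 : (0:ℝ) < M ^ 2 / (4 * γ ^ 2) := by positivity
    generalize hzz : ‖z‖ = a at hb ⊢
    generalize hmm : M ^ 2 / (4 * γ ^ 2) = A at hb h8 ⊢
    have h6 : γ / (1 + γ) * a * (1 + γ) = γ * a := by field_simp
    nlinarith [mul_le_mul_of_nonneg_right hb h5.le, h6]
  -- Cauchy-Schwarz on the rows of (1 - γP)⁻¹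
  set y : S → ℝ := (1 - γ • P)⁻¹.mulVec (fun s => Real.sqrt (σ s)) with hy
  have hy0 : ∀ s, 0 ≤ y s :=
    aux_inv_nonneg hP hrow hγ0' hγ1 (fun i => Real.sqrt_nonneg _)
  set N : Matrix S S ℝ := (1 - γ • P)⁻¹ with hN
  have hN0 : ∀ s t, 0 ≤ N s t := fun s t => aux_inv_entry_nonneg hP hrow hγ0' hγ1 s t
  have hNrow : ∀ s, ∑ i, N s i = M := by
    intro s
    have := congrFun (aux_inv_const hP hrow hγ0' hγ1 1) s
    have h6 : (1 - γ • P)⁻¹.mulVec (fun _ => (1:ℝ)) s = ∑ i, N s i := by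
      simp [Matrix.mulVec, dotProduct, hN]
    rw [h6] at this
    rw [this, hM]
  have hys : ∀ s, (y s) ^ 2 ≤ M * z s := by
    intro s
    have hye : y s = ∑ i, N s i * Real.sqrt (σ i) := rfl
    have hze : z s = ∑ i, N s i * σ i := rfl
    have hcs := Finset.sum_mul_sq_le_sq_mul_sq Finset.univ
      (fun i => Real.sqrt (N s i)) (fun i => Real.sqrt (N s i) * Real.sqrt (σ i))
    have e1 : ∀ i, Real.sqrt (N s i) * (Real.sqrt (N s i) * Real.sqrt (σ i))
        = N s i * Real.sqrt (σ i) := by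
      intro i; rw [← mul_assoc, Real.mul_self_sqrt (hN0 s i)]
    have e2 : ∀ i, Real.sqrt (N s i) ^ 2 = N s i := fun i => Real.sq_sqrt (hN0 s i)
    have e3 : ∀ i, (Real.sqrt (N s i) * Real.sqrt (σ i)) ^ 2 = N s i * σ i := by
      intro i
      rw [mul_pow, e2, Real.sq_sqrt (hσ0 i)]
    rw [Finset.sum_congr rfl (fun i _ => e1 i), Finset.sum_congr rfl (fun i _ => e2 i),
      Finset.sum_congr rfl (fun i _ => e3 i), hNrow s] at hcs
    rw [hye, hze]
    exact hcs
  -- final combination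
  set R : ℝ := (1 + γ) / (γ ^ 2 * (1 - γ) ^ 3) with hR
  have hRpos : 0 < R := by rw [hR]; positivity
  have hysR : ∀ s, (y s) ^ 2 ≤ R := by
    intro s
    have h1 := hys s
    have h2 : z s ≤ (1 + γ) * (M ^ 2 / (4 * γ ^ 2)) := le_trans (hzn s) hznorm
    have h3 : M * ((1 + γ) * (M ^ 2 / (4 * γ ^ 2))) ≤ R := by
      rw [hR, hM]
      have hd : (1 + γ) / (γ ^ 2 * (1 - γ) ^ 3)
            - 1 / (1 - γ) * ((1 + γ) * ((1 / (1 - γ)) ^ 2 / (4 * γ ^ 2)))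
          = (3 * (1 + γ)) / (4 * (γ ^ 2 * (1 - γ) ^ 3)) := by
        have hne1 : (1:ℝ) - γ ≠ 0 := ne_of_gt h1γ
        have hne2 : γ ≠ 0 := ne_of_gt hγ0
        field_simp
        ring
      have hpos : (0:ℝ) ≤ (3 * (1 + γ)) / (4 * (γ ^ 2 * (1 - γ) ^ 3)) := by positivity
      linarith
    calc (y s) ^ 2 ≤ M * z s := h1
      _ ≤ M * ((1 + γ) * (M ^ 2 / (4 * γ ^ 2))) :=
          mul_le_mul_of_nonneg_left h2 hMpos.le
      _ ≤ R := h3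
  have hnormy : ‖y‖ ≤ Real.sqrt R := by
    rw [pi_norm_le_iff_of_nonneg (Real.sqrt_nonneg R)]
    intro s
    rw [Real.norm_eq_abs, abs_of_nonneg (hy0 s)]
    exact (Real.le_sqrt (hy0 s) hRpos.le).2 (hysR s)
  calc ‖y‖ ^ 2 ≤ Real.sqrt R ^ 2 := by
        apply pow_le_pow_left₀ (norm_nonneg y) hnormy
    _ = R := Real.sq_sqrt hRpos.le
end

section
/- Let T and T_π be the Bellman optimality and policy operators of a DMDP with γ ∈ (0,1). Suppose vectors v ≤ v' satisfy v ≤ T_π(v) and there is a policy π' with, for every state s, either (π'(s) = π(s) and v'(s) = v(s)) or v'(s) ≤ r(s,π'(s)) + γ P_{s,π'(s)}ᵀ v. Then v' ≤ T_{π'}(v'). -/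
theorem stmt_19 {S A : Type*} [Fintype S] [Fintype A]
    (r : S → A → ℝ) (P : S → A → S → ℝ) (γ : ℝ)
    (hγ : γ ∈ Set.Ioo (0 : ℝ) 1)
    (hP : ∀ s a s', 0 ≤ P s a s') (hP1 : ∀ s a, ∑ s', P s a s' = 1)
    (π π' : S → A) (v v' : S → ℝ)
    (hle : ∀ s, v s ≤ v' s)
    (hmono : ∀ s, v s ≤ r s (π s) + γ * ∑ s', P s (π s) s' * v s')
    (hcases : ∀ s, (π' s = π s ∧ v' s = v s) ∨
      v' s ≤ r s (π' s) + γ * ∑ s', P s (π' s) s' * v s') :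
    ∀ s, v' s ≤ r s (π' s) + γ * ∑ s', P s (π' s) s' * v' s' := by
  intro s
  have key : v' s ≤ r s (π' s) + γ * ∑ s', P s (π' s) s' * v s' := by
    rcases hcases s with ⟨h1, h2⟩ | h
    · rw [h1, h2]; exact hmono s
    · exact h
  refine key.trans ?_
  gcongr with t _
  · exact hγ.1.le
  · exact hP s (π' s) t
  · exact hle t
end
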